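/- arXiv:2601.10665 — 4 statements merged into one kernel-verified Lean document; each statement's English description precedes it below -/
import Mathlib

section
/- Let Λ ⊆ Δ_n^↓ be nonempty and compact. Then for every x ∈ Λ there exists a minimal element x_m of Λ (with respect to majorization) such that x_m ≺ x. -/
open Finset Set

/-- Partial sum of the first `k` components. -/
def pSum {n : ℕ} (x : Fin n → ℝ) (k : ℕ) : ℝ :=
  ∑ i : Fin n, if (i : ℕ) < k then x i else 0

/-- Majorization: all partial sums of `x` are bounded by those of `y`. -/
def Maj {n : ℕ} (x y : Fin n → ℝ) : Prop :=
  ∀ k : ℕ, pSum x k ≤ pSum y k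

/-- The ordered probability simplex Δ_n^↓. -/
def OrderedSimplex (n : ℕ) : Set (Fin n → ℝ) :=
  {x | (∀ i j : Fin n, i ≤ j → x j ≤ x i) ∧ (∀ i, 0 ≤ x i) ∧ ∑ i, x i = 1}

/-- Euclidean dot product on `Fin n → ℝ`. -/
def dotp {n : ℕ} (x v : Fin n → ℝ) : ℝ := ∑ i, x i * v i

lemma maj_refl {n : ℕ} (x : Fin n → ℝ) : Maj x x := fun _ => le_rfl

lemma maj_trans {n : ℕ} {a b c : Fin n → ℝ} (h1 : Maj a b) (h2 : Maj b c) : Maj a c :=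
  fun k => (h1 k).trans (h2 k)

lemma pSum_succ {n : ℕ} (x : Fin n → ℝ) (i : Fin n) :
    pSum x ((i : ℕ) + 1) = pSum x (i : ℕ) + x i := by
  unfold pSum
  have h : ∀ j : Fin n, (if (j : ℕ) < (i : ℕ) + 1 then x j else 0) =
      (if (j : ℕ) < (i : ℕ) then x j else 0) + (if j = i then x j else 0) := by
    intro j
    rcases eq_or_ne j i with rfl | hji
    · simp
    · have hne : (j : ℕ) ≠ (i : ℕ) := fun h => hji (Fin.ext h)
      by_cases hlt : (j : ℕ) < (i : ℕ)
      · simp [hlt, hji, Nat.lt_succ_of_lt hlt]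
      · have hnlt : ¬ (j : ℕ) < (i : ℕ) + 1 := by omega
        simp [hlt, hji, hnlt]
  rw [Finset.sum_congr rfl (fun j _ => h j), Finset.sum_add_distrib,
    Finset.sum_ite_eq' Finset.univ i x]
  simp

lemma maj_antisymm {n : ℕ} {y z : Fin n → ℝ} (h1 : Maj y z) (h2 : Maj z y) : y = z := by
  have hp : ∀ k, pSum y k = pSum z k := fun k => le_antisymm (h1 k) (h2 k)
  funext i
  have hy := pSum_succ y i
  have hz := pSum_succ z i
  have := hp ((i : ℕ) + 1)
  rw [hy, hz, hp (i : ℕ)] at this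
  linarith

lemma pSum_continuous {n : ℕ} (k : ℕ) : Continuous (fun z : Fin n → ℝ => pSum z k) := by
  unfold pSum
  refine continuous_finset_sum _ fun i _ => ?_
  by_cases h : (i : ℕ) < k
  · simpa [h] using continuous_apply i
  · simp only [h, if_false]
    exact continuous_const

lemma maj_closed {n : ℕ} (y : Fin n → ℝ) : IsClosed {z : Fin n → ℝ | Maj z y} := by
  have : {z : Fin n → ℝ | Maj z y} = ⋂ k, {z | pSum z k ≤ pSum y k} := by
    ext z; simp [Maj, Set.mem_iInter]
  rw [this]
  exact isClosed_iInter fun k => isClosed_le (pSum_continuous k) continuous_const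

theorem stmt_3 {n : ℕ} (Λ : Set (Fin n → ℝ))
    (hΛ : Λ ⊆ OrderedSimplex n) (hne : Λ.Nonempty) (hc : IsCompact Λ)
    (x : Fin n → ℝ) (hx : x ∈ Λ) :
    ∃ m ∈ Λ, Maj m x ∧ ∀ z ∈ Λ, Maj z m → z = m := by
  set Λ' : Set (Fin n → ℝ) := {z | z ∈ Λ ∧ Maj z x} with hΛ'def
  have hxΛ' : x ∈ Λ' := ⟨hx, maj_refl x⟩
  have key : ∃ m : Λ', ∀ a : Λ', Maj (a : Fin n → ℝ) m → Maj (m : Fin n → ℝ) a := by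
    apply exists_maximal_of_chains_bounded
      (r := fun a b : Λ' => Maj (b : Fin n → ℝ) (a : Fin n → ℝ))
    · intro c hchain
      rcases c.eq_empty_or_nonempty with rfl | ⟨c0, hc0⟩
      · exact ⟨⟨x, hxΛ'⟩, by simp⟩
      · have hι : Nonempty c := ⟨⟨c0, hc0⟩⟩
        set U : c → Set (Fin n → ℝ) := fun a => Λ ∩ {z | Maj z (a : Fin n → ℝ)} with hU
        have hUcl : ∀ a : c, IsClosed (U a) :=
          fun a => (hc.isClosed).inter (maj_closed _)
        have hUcp : ∀ a : c, IsCompact (U a) :=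
          fun a => hc.inter_right (maj_closed _)
        have hUne : ∀ a : c, (U a).Nonempty :=
          fun a => ⟨(a : Λ'), (a : Λ').2.1, maj_refl _⟩
        have hUdir : Directed (· ⊇ ·) U := by
          intro a b
          rcases eq_or_ne (a : Λ') (b : Λ') with hab | hab
          · exact ⟨a, subset_rfl, by rw [hU]; simp [hab]⟩
          · rcases hchain a.2 b.2 hab with h | h
            · -- h : Maj b a
              exact ⟨b, fun z hz => ⟨hz.1, maj_trans hz.2 h⟩, subset_rfl⟩
            · exact ⟨a, subset_rfl, fun z hz => ⟨hz.1, maj_trans hz.2 h⟩⟩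
        obtain ⟨z, hz⟩ := IsCompact.nonempty_iInter_of_directed_nonempty_isCompact_isClosed
          U hUdir hUne hUcp hUcl
        have hzall : ∀ a : c, z ∈ Λ ∧ Maj z (a : Fin n → ℝ) := by
          intro a
          have := Set.mem_iInter.mp hz a
          exact this
        have hzx : Maj z x := maj_trans (hzall ⟨c0, hc0⟩).2 c0.2.2
        refine ⟨⟨z, (hzall ⟨c0, hc0⟩).1, hzx⟩, ?_⟩
        intro a ha
        exact (hzall ⟨a, ha⟩).2
    · intro a b c hab hbc
      exact maj_trans hbc hab
  obtain ⟨m, hm⟩ := key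
  refine ⟨m, m.2.1, m.2.2, ?_⟩
  intro z hzΛ hzm
  have hzΛ' : z ∈ Λ' := ⟨hzΛ, maj_trans hzm m.2.2⟩
  exact maj_antisymm hzm (hm ⟨z, hzΛ'⟩ hzm)
end

section
/- Conversely, if x, y ∈ Δ_n^↓ satisfy [x·v^↑, x·v^↓] ⊆ [y·v^↑, y·v^↓] for every real vector v (where v^↓, v^↑ are the nonincreasing and nondecreasing rearrangements), then x ≺ y. -/
open Finset Set

lemma dotp_b {n k : ℕ} (x : Fin n → ℝ) :
    dotp x (fun i => if (i:ℕ) < k then 1 else 0) = pSum x k := by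
  unfold dotp pSum
  refine Finset.sum_congr rfl fun i _ => ?_
  by_cases hik : (i:ℕ) < k <;> simp [hik]

lemma aux_key {n k : ℕ} (x : Fin n → ℝ) (hx : x ∈ OrderedSimplex n) (hk : k ≤ n) :
    dotp x (fun i => if n - k ≤ (i:ℕ) then 1 else 0)
      ≤ dotp x (fun i => if (i:ℕ) < k then 1 else 0) := by
  set X : ℕ → ℝ := fun j => if h : j < n then x ⟨j, h⟩ else 0 with hX
  have hXi : ∀ i : Fin n, x i = X (i : ℕ) := by
    intro i; simp [hX, i.isLt]
  have e1 : dotp x (fun i => if n - k ≤ (i:ℕ) then 1 else 0)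
      = ∑ j ∈ Finset.range n, (if n - k ≤ j then X j else 0) := by
    unfold dotp
    rw [← Fin.sum_univ_eq_sum_range (fun j => if n - k ≤ j then X j else 0) n]
    refine Finset.sum_congr rfl fun i _ => ?_
    rw [hXi i]; by_cases hik : n - k ≤ (i:ℕ) <;> simp [hik]
  have e2 : dotp x (fun i => if (i:ℕ) < k then 1 else 0)
      = ∑ j ∈ Finset.range n, (if j < k then X j else 0) := by
    unfold dotp
    rw [← Fin.sum_univ_eq_sum_range (fun j => if j < k then X j else 0) n]
    refine Finset.sum_congr rfl fun i _ => ?_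
    rw [hXi i]; by_cases hik : (i:ℕ) < k <;> simp [hik]
  rw [e1, e2]
  have f1 : ∑ j ∈ Finset.range n, (if n - k ≤ j then X j else 0)
      = ∑ j ∈ Finset.Ico (n - k) n, X j := by
    rw [← Finset.sum_filter]
    congr 1
    ext j; simp [Finset.mem_filter, Finset.mem_Ico]; omega
  have f2 : ∑ j ∈ Finset.range n, (if j < k then X j else 0)
      = ∑ j ∈ Finset.range k, X j := by
    rw [← Finset.sum_filter]
    congr 1
    ext j; simp; omega
  rw [f1, f2, Finset.sum_Ico_eq_sum_range]
  have hnk : n - (n - k) = k := by omega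
  rw [hnk]
  refine Finset.sum_le_sum fun j hj => ?_
  have hjk : j < k := Finset.mem_range.mp hj
  have h1 : n - k + j < n := by omega
  have h2 : j < n := by omega
  simp only [hX, dif_pos h1, dif_pos h2]
  exact hx.1 ⟨j, h2⟩ ⟨n - k + j, h1⟩ (Fin.mk_le_mk.mpr (by omega))

theorem stmt_9 {n : ℕ} (x y : Fin n → ℝ)
    (hx : x ∈ OrderedSimplex n) (hy : y ∈ OrderedSimplex n)
    (h : ∀ (a b : Fin n → ℝ) (σ : Equiv.Perm (Fin n)),
      Monotone a → Antitone b → b = a ∘ σ →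
        Set.Icc (dotp x a) (dotp x b) ⊆ Set.Icc (dotp y a) (dotp y b)) :
    Maj x y := by
  intro k
  rcases le_or_gt k n with hk | hk
  · set a : Fin n → ℝ := fun i => if n - k ≤ (i:ℕ) then 1 else 0 with ha
    set b : Fin n → ℝ := fun i => if (i:ℕ) < k then 1 else 0 with hb
    have hmono : Monotone a := by
      intro i j hij
      have hij' : (i:ℕ) ≤ j := hij
      simp only [ha]
      split_ifs <;> norm_num <;> omega
    have hanti : Antitone b := by
      intro i j hij
      have hij' : (i:ℕ) ≤ j := hij
      simp only [hb]
      split_ifs <;> norm_num <;> omega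
    have hcomp : b = a ∘ Fin.revPerm := by
      funext i
      have hiv : (i:ℕ) < n := i.isLt
      simp only [ha, hb, Function.comp, Fin.revPerm_apply, Fin.val_rev]
      split_ifs <;> first | rfl | omega
    have hsub := h a b Fin.revPerm hmono hanti hcomp
    have hmem : dotp x b ∈ Set.Icc (dotp x a) (dotp x b) :=
      ⟨aux_key x hx hk, le_refl _⟩
    have := (hsub hmem).2
    rwa [dotp_b x, dotp_b y] at this
  · have ex : pSum x k = 1 := by
      rw [← hx.2.2]; unfold pSum
      refine Finset.sum_congr rfl fun i _ => ?_
      rw [if_pos (by omega : (i:ℕ) < k)]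
    have ey : pSum y k = 1 := by
      rw [← hy.2.2]; unfold pSum
      refine Finset.sum_congr rfl fun i _ => ?_
      rw [if_pos (by omega : (i:ℕ) < k)]
    rw [ex, ey]
end

section
/- Let n ≥ 3 and let Λ ⊆ Δ_n^↓ be compact with nonempty interior relative to the hyperplane H = {x : Σ x_i = 1}. Then the majorization supremum of Λ cannot lie in the (relative) interior of Λ. -/
/-!
If Λ contained a neighbourhood of its majorization upper bound `s` inside the hyperplane
`∑ zᵢ = 1`, it would contain `s + δ (e₀ - e₁)` for a small `δ > 0`. That vector still lies
in the hyperplane, but its first partial sum `s₀ + δ` exceeds that of `s`, so it is not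
majorized by `s`.
-/

open Finset Set

theorem pSum_one {n : ℕ} (x : Fin n → ℝ) (h : 0 < n) : pSum x 1 = x ⟨0, h⟩ := by
  rw [pSum, Finset.sum_eq_single ⟨0, h⟩]
  · simp
  · intro i _ hi
    rw [if_neg]
    exact fun h1 => hi (Fin.ext (Nat.lt_one_iff.mp h1))
  · simp

theorem Maj.apply_zero_le {n : ℕ} {x y : Fin n → ℝ} (hxy : Maj x y) (h : 0 < n) :
    x ⟨0, h⟩ ≤ y ⟨0, h⟩ := by
  simpa only [pSum_one x h, pSum_one y h] using hxy 1

theorem exists_sum_eq_dist_lt_not_maj {n : ℕ} (hn : 2 ≤ n) (s : Fin n → ℝ) {ε : ℝ}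
    (hε : 0 < ε) : ∃ z : Fin n → ℝ, ∑ i, z i = ∑ i, s i ∧ dist z s < ε ∧ ¬ Maj z s := by
  set i₀ : Fin n := ⟨0, by omega⟩
  set i₁ : Fin n := ⟨1, by omega⟩
  have hδ : 0 < ε / 3 := by positivity
  set d : Fin n → ℝ := Pi.single i₀ (ε / 3) - Pi.single i₁ (ε / 3)
  refine ⟨s + d, ?_, ?_, fun hmaj => ?_⟩
  · simp [d, Finset.sum_add_distrib, Finset.sum_sub_distrib]
  · calc dist (s + d) s = ‖d‖ := by rw [dist_eq_norm, add_sub_cancel_left]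
      _ ≤ ‖(Pi.single i₀ (ε / 3) : Fin n → ℝ)‖ + ‖(Pi.single i₁ (ε / 3) : Fin n → ℝ)‖ :=
        norm_sub_le _ _
      _ = 2 * (ε / 3) := by simp only [Pi.norm_single, Real.norm_of_nonneg hδ.le]; ring
      _ < ε := by linarith
  · have hi : i₀ ≠ i₁ := by simp [i₀, i₁, Fin.ext_iff]
    have hhead : (s + d) i₀ ≤ s i₀ := hmaj.apply_zero_le _
    simp only [d, Pi.add_apply, Pi.sub_apply, Pi.single_eq_same, Pi.single_eq_of_ne hi,
      sub_zero, add_le_iff_nonpos_right] at hhead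
    linarith

theorem stmt_15_general {n : ℕ} (hn : 3 ≤ n) (Λ : Set (Fin n → ℝ)) (s : Fin n → ℝ)
    (hs : s ∈ OrderedSimplex n)
    (hub : ∀ k ∈ Λ, Maj k s) :
    ¬ ∃ ε > (0 : ℝ), ∀ z : Fin n → ℝ,
      (∑ i, z i = 1) → dist z s < ε → z ∈ Λ := by
  rintro ⟨ε, hε, hball⟩
  obtain ⟨z, hsum, hdist, hnot⟩ := exists_sum_eq_dist_lt_not_maj (by omega) s hε
  exact hnot (hub z (hball z (hsum.trans hs.2.2) hdist))

theorem stmt_15 {n : ℕ} (hn : 3 ≤ n) (Λ : Set (Fin n → ℝ)) (s : Fin n → ℝ)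
    (hΛ : Λ ⊆ OrderedSimplex n) (hc : IsCompact Λ)
    (hint : ∃ x ∈ Λ, ∃ ε > (0 : ℝ), ∀ z : Fin n → ℝ,
      (∑ i, z i = 1) → dist z x < ε → z ∈ Λ)
    (hs : s ∈ OrderedSimplex n)
    (hub : ∀ k ∈ Λ, Maj k s)
    (hlub : ∀ ρ ∈ OrderedSimplex n, (∀ k ∈ Λ, Maj k ρ) → Maj s ρ) :
    ¬ ∃ ε > (0 : ℝ), ∀ z : Fin n → ℝ,
      (∑ i, z i = 1) → dist z s < ε → z ∈ Λ :=
  stmt_15_general hn Λ s hs hub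
end

section
/- Let n ≥ 3 and let Λ ⊆ Δ_n^↓ be compact with nonempty interior relative to the hyperplane H = {x : Σ x_i = 1}. Then the majorization infimum of Λ cannot lie in the (relative) interior of Λ. -/
open Finset Set

theorem stmt_16 {n : ℕ} (hn : 3 ≤ n) (Λ : Set (Fin n → ℝ)) (m : Fin n → ℝ)
    (hΛ : Λ ⊆ OrderedSimplex n) (hc : IsCompact Λ)
    (hint : ∃ x ∈ Λ, ∃ ε > (0 : ℝ), ∀ z : Fin n → ℝ,
      (∑ i, z i = 1) → dist z x < ε → z ∈ Λ)
    (hm : m ∈ OrderedSimplex n)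
    (hlb : ∀ k ∈ Λ, Maj m k)
    (hglb : ∀ ρ ∈ OrderedSimplex n, (∀ k ∈ Λ, Maj ρ k) → Maj ρ m) :
    ¬ ∃ ε > (0 : ℝ), ∀ z : Fin n → ℝ,
      (∑ i, z i = 1) → dist z m < ε → z ∈ Λ := by
  rintro ⟨ε, hε, h⟩
  have h0 : 0 < n := by omega
  have h1 : 1 < n := by omega
  set i0 : Fin n := ⟨0, h0⟩
  set i1 : Fin n := ⟨1, h1⟩
  have hne : i1 ≠ i0 := by simp [i0, i1, Fin.ext_iff]
  set δ : ℝ := ε / 2 with hδ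
  have hδpos : 0 < δ := by positivity
  set z : Fin n → ℝ := fun i => m i + (if i = i1 then δ else 0) - (if i = i0 then δ else 0)
    with hz
  have hsum : ∑ i, z i = 1 := by
    simp only [hz, Finset.sum_sub_distrib, Finset.sum_add_distrib,
      Finset.sum_ite_eq', Finset.mem_univ, if_true]
    have := hm.2.2
    linarith
  have hdist : dist z m < ε := by
    rw [dist_pi_lt_iff hε]
    intro i
    have e1 : (if i = i1 then δ else 0) ≤ δ ∧ 0 ≤ (if i = i1 then δ else 0) := by
      split <;> simp [hδpos.le]
    have e0 : (if i = i0 then δ else 0) ≤ δ ∧ 0 ≤ (if i = i0 then δ else 0) := by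
      split <;> simp [hδpos.le]
    have : dist (z i) (m i) ≤ δ := by
      rw [Real.dist_eq, hz, abs_le]
      dsimp only
      constructor <;> [linarith [e1.2, e0.1]; linarith [e1.1, e0.2]]
    linarith
  have hzΛ : z ∈ Λ := h z hsum hdist
  have hmaj := hlb z hzΛ 1
  have hp : ∀ x : Fin n → ℝ, pSum x 1 = x i0 := by
    intro x
    unfold pSum
    rw [Finset.sum_congr rfl (fun i _ => ?_), Finset.sum_ite_eq' Finset.univ i0 x]
    · simp
    · congr 1
      simp [i0, Fin.ext_iff, Nat.lt_one_iff]
  rw [hp m, hp z, hz] at hmaj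
  simp only [if_neg hne.symm, if_pos rfl, ite_true, add_zero] at hmaj
  linarith
end
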